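/- Let N be a connected d-regular graph with m vertices, let n ≥ 1, and let f be a strictly positive clustering tendency. For each ε > 0 define a matrix P^ε on the configuration space Ω by: P^ε(x, x^{i,j}) = (1/d)·(x_i/n)·f_ε(x_j)/(f_ε(x_j) + f_ε(x_i)) whenever i ≠ j, v_i ∼ v_j and x_i ≥ 1; P^ε(x,y) = 0 for every other y ≠ x; and P^ε(x,x) = 1 − Σ_{y≠x} P^ε(x,y). Then each P^ε is a stochastic matrix and the family (X^ε, Ω, P^ε) is a clustering process: for every x with x_i ≥ 1 and every j with v_j ∼ v_i or j = i, the function ε ↦ P^ε(x, x^{i,j}) is Θ(ε¹) if x_j = 0 and Θ(ε⁰) if x_j > 0. -/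

import Mathlib

open Finset

/-- `f` is `Θ(ε^k)` as `ε → 0⁺`: there are positive constants `M₁, M₂, ε̄` with
`M₁ ε^k ≤ f ε ≤ M₂ ε^k` for all `0 < ε < ε̄`. -/
def IsTheta (f : ℝ → ℝ) (k : ℤ) : Prop :=
  ∃ M₁ M₂ εbar : ℝ, 0 < M₁ ∧ 0 < M₂ ∧ 0 < εbar ∧
    ∀ ε : ℝ, 0 < ε → ε < εbar → M₁ * ε ^ k ≤ f ε ∧ f ε ≤ M₂ * ε ^ k

/-- `P(u,v) > 0` in the order-of-magnitude sense: `ε ↦ P^ε(u,v)` is `Θ(ε^k)`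
for some integer `k`. -/
def EPos {Ω : Type*} (P : ℝ → Ω → Ω → ℝ) (u v : Ω) : Prop :=
  ∃ k : ℤ, IsTheta (fun ε => P ε u v) k

/-- Configurations of `n` particles on the vertex set `V`. -/
abbrev Config (V : Type) [Fintype V] (n : ℕ) := {x : V → ℕ // ∑ v, x v = n}

noncomputable instance Config.fintype {V : Type} [Fintype V] [DecidableEq V] {n : ℕ} :
    Fintype (Config V n) :=
  Fintype.ofInjective
    (fun x : Config V n => fun v : V =>
      (⟨x.val v, Nat.lt_succ_of_le ((Finset.single_le_sum
        (f := x.val) (fun i _ => Nat.zero_le _) (Finset.mem_univ v)).trans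
        (le_of_eq x.2))⟩ : Fin (n + 1)))
    (fun a b h => Subtype.ext (funext fun v => congrArg Fin.val (congrFun h v)))

/-- The configuration `x^{i,j}` obtained from `x` by moving one particle from vertex `i`
to vertex `j` (with `x^{i,i} = x`). -/
def move {V : Type} [DecidableEq V] (x : V → ℕ) (i j : V) : V → ℕ :=
  if i = j then x else Function.update (Function.update x i (x i - 1)) j (x j + 1)

/-- The support of a configuration: the set of occupied vertices. -/
def supp {V : Type} [Fintype V] [DecidableEq V] (x : V → ℕ) : Finset V :=
  Finset.univ.filter fun v => x v ≠ 0

open Filter Topology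

/-!
Off the diagonal, `P^ε(x, x^{i,j})` is a fixed positive weight times
`f_ε(x_j) / (f_ε(x_j) + f_ε(x_i))`; as `x_i ≥ 1`, the denominator is bounded above and below by
positive constants, so the ratio has the order of `f_ε(x_j)`. On a `d`-regular graph the weights
of all moves out of `x` add up to at most one, so the diagonal entry is at least one minus the
largest ratio, and the ratios stay uniformly below `1` because only the finitely many values
`f_ε(0), …, f_ε(n)` occur.
-/

theorem isTheta_iff_eventually {f : ℝ → ℝ} {k : ℤ} :
    IsTheta f k ↔ ∃ M₁ M₂ : ℝ, 0 < M₁ ∧ 0 < M₂ ∧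
      ∀ᶠ ε in 𝓝[>] 0, M₁ * ε ^ k ≤ f ε ∧ f ε ≤ M₂ * ε ^ k := by
  simp only [IsTheta, (nhdsGT_basis (0 : ℝ)).eventually_iff, Set.mem_Ioo, and_imp]
  constructor
  · rintro ⟨M₁, M₂, εbar, h₁, h₂, hε, h⟩
    exact ⟨M₁, M₂, h₁, h₂, εbar, hε, fun ε h0 h1 => h ε h0 h1⟩
  · rintro ⟨M₁, M₂, h₁, h₂, εbar, hε, h⟩
    exact ⟨M₁, M₂, εbar, h₁, h₂, hε, fun ε h0 h1 => h h0 h1⟩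

namespace IsTheta

variable {f g : ℝ → ℝ} {k : ℤ}

theorem congr (hf : IsTheta f k) (h : ∀ ε, 0 < ε → f ε = g ε) : IsTheta g k := by
  obtain ⟨M₁, M₂, εbar, h₁, h₂, hε, hf⟩ := hf
  exact ⟨M₁, M₂, εbar, h₁, h₂, hε, fun ε h0 h1 => h ε h0 ▸ hf ε h0 h1⟩

theorem const_mul (hf : IsTheta f k) {c : ℝ} (hc : 0 < c) : IsTheta (fun ε => c * f ε) k := by
  obtain ⟨M₁, M₂, εbar, h₁, h₂, hε, hf⟩ := hf
  refine ⟨c * M₁, c * M₂, εbar, mul_pos hc h₁, mul_pos hc h₂, hε, fun ε h0 h1 => ?_⟩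
  obtain ⟨hlo, hhi⟩ := hf ε h0 h1
  constructor <;> nlinarith

theorem div_add (hf : IsTheta f k) (hk : 0 ≤ k) (hg : IsTheta g 0) :
    IsTheta (fun ε => f ε / (f ε + g ε)) k := by
  obtain ⟨M₁, M₂, hM₁, hM₂, hf⟩ := isTheta_iff_eventually.1 hf
  obtain ⟨N₁, N₂, hN₁, hN₂, hg⟩ := isTheta_iff_eventually.1 hg
  refine isTheta_iff_eventually.2 ⟨M₁ / (M₂ + N₂), M₂ / N₁, by positivity, by positivity, ?_⟩
  filter_upwards [hf, hg, Ioo_mem_nhdsGT one_pos] with ε ⟨hf₁, hf₂⟩ ⟨hg₁, hg₂⟩ ⟨hε0, hε1⟩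
  simp only [zpow_zero, mul_one] at hg₁ hg₂
  have hf₂' : f ε ≤ M₂ := hf₂.trans (mul_le_of_le_one_right hM₂.le (zpow_le_one₀ hε0 hε1.le hk))
  have hf0 : 0 ≤ f ε := le_trans (by positivity) hf₁
  constructor
  · calc M₁ / (M₂ + N₂) * ε ^ k = M₁ * ε ^ k / (M₂ + N₂) := by ring
      _ ≤ f ε / (f ε + g ε) := div_le_div₀ hf0 hf₁ (by linarith) (by linarith)
  · calc f ε / (f ε + g ε) ≤ M₂ * ε ^ k / N₁ := div_le_div₀ (by positivity) hf₂ hN₁ (by linarith)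
      _ = M₂ / N₁ * ε ^ k := by ring

end IsTheta

theorem exists_eventually_uniform_bounds {u : ℕ → ℝ → ℝ} {k : ℕ → ℤ}
    (hu : ∀ p, IsTheta (u p) (k p)) (hk : ∀ p, 0 ≤ k p) (n : ℕ) :
    ∃ c C : ℝ, 0 < c ∧ 0 < C ∧
      ∀ᶠ ε in 𝓝[>] 0, ∀ p ≤ n, u p ε ≤ C ∧ (k p = 0 → c ≤ u p ε) := by
  choose M₁ M₂ hM₁ hM₂ hbounds using fun p => isTheta_iff_eventually.1 (hu p)
  have hne : (range (n + 1)).Nonempty := ⟨0, by simp⟩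
  refine ⟨(range (n + 1)).inf' hne M₁, (range (n + 1)).sup' hne M₂,
    (lt_inf'_iff hne).2 fun p _ => hM₁ p, (hM₂ 0).trans_le (le_sup' M₂ (by simp)), ?_⟩
  filter_upwards [(eventually_all_finset (range (n + 1))).2 fun p _ => hbounds p,
    Ioo_mem_nhdsGT one_pos] with ε hε ⟨hε0, hε1⟩ p hp
  have hp' : p ∈ range (n + 1) := mem_range_succ_iff.2 hp
  obtain ⟨hlo, hhi⟩ := hε p hp'
  refine ⟨hhi.trans ?_, fun hk0 => (inf'_le M₁ hp').trans (by simpa [hk0] using hlo)⟩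
  calc M₂ p * ε ^ k p ≤ M₂ p := mul_le_of_le_one_right (hM₂ p).le (zpow_le_one₀ hε0 hε1.le (hk p))
    _ ≤ _ := le_sup' M₂ hp'

theorem div_add_le_div_add {s t c C : ℝ} (ht : 0 ≤ t) (hc : 0 < c) (htC : t ≤ C) (hcs : c ≤ s) :
    t / (t + s) ≤ C / (C + c) := by
  rw [div_le_div_iff₀ (by linarith) (by linarith)]
  nlinarith [mul_le_mul_of_nonneg_left hcs (ht.trans htC)]

theorem SimpleGraph.IsRegularOfDegree.sum_filter_adj_fst {V R : Type*} [Fintype V]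
    [AddCommMonoid R] {G : SimpleGraph V} [DecidableRel G.Adj] {d : ℕ}
    (hG : G.IsRegularOfDegree d) (w : V → R) :
    ∑ p ∈ univ.filter (fun p : V × V => G.Adj p.1 p.2), w p.1 = d • ∑ v, w v := by
  rw [sum_filter, Fintype.sum_prod_type, smul_sum]
  refine sum_congr rfl fun v _ => ?_
  dsimp only
  rw [← sum_filter, sum_const, ← G.neighborFinset_eq_filter, G.card_neighborFinset_eq_degree,
    hG v]

theorem move_ne {V : Type} [DecidableEq V] (x : V → ℕ) {i j : V} (hij : i ≠ j) :
    move x i j ≠ x := fun h => by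
  simpa [move, hij] using congrFun h j

section Configurations

variable {V : Type} [Fintype V] {n : ℕ}

theorem Config.apply_le (x : Config V n) (v : V) : x.val v ≤ n :=
  (single_le_sum (fun _ _ => Nat.zero_le _) (mem_univ v)).trans x.2.le

variable (G : SimpleGraph V) [DecidableRel G.Adj] (d : ℕ)

def movePairs (x : Config V n) : Finset (V × V) :=
  univ.filter fun p => G.Adj p.1 p.2 ∧ 1 ≤ x.val p.1

theorem sum_movePairs_weight_le_one (hG : G.IsRegularOfDegree d) (x : Config V n) :
    ∑ p ∈ movePairs G x, (1 / (d : ℝ)) * ((x.val p.1 : ℝ) / n) ≤ 1 := by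
  set w : V → ℝ := fun v => (1 / (d : ℝ)) * ((x.val v : ℝ) / n)
  have hsub : movePairs G x ⊆ univ.filter fun p : V × V => G.Adj p.1 p.2 :=
    fun p hp => by simp only [movePairs, mem_filter] at hp ⊢; exact ⟨hp.1, hp.2.1⟩
  calc ∑ p ∈ movePairs G x, w p.1
      ≤ ∑ p ∈ univ.filter (fun p : V × V => G.Adj p.1 p.2), w p.1 :=
        sum_le_sum_of_subset_of_nonneg hsub fun _ _ _ => by positivity
    _ = (d / d) * ((∑ v, (x.val v : ℝ)) / n) := by
        rw [hG.sum_filter_adj_fst w, nsmul_eq_mul, ← mul_sum, ← sum_div]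
        ring
    _ = (d / d) * (n / n) := by rw [← Nat.cast_sum, x.2]
    _ ≤ 1 := mul_le_one₀ (div_self_le_one _) (by positivity) (div_self_le_one _)

end Configurations

section ModelOne

variable {V : Type} [Fintype V] [DecidableEq V] {n : ℕ}

theorem sum_move (x : V → ℕ) {i : V} (j : V) (hxi : 1 ≤ x i) :
    ∑ v, move x i j v = ∑ v, x v := by
  by_cases hij : i = j
  · rw [move, if_pos hij]
  have hi : i ∈ (univ : Finset V) \ {j} := by simp [hij]
  rw [move, if_neg hij, sum_update_of_mem (mem_univ j), sum_update_of_mem hi,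
    sum_eq_add_sum_sdiff_singleton_of_mem (mem_univ j) x,
    sum_eq_add_sum_sdiff_singleton_of_mem hi x]
  omega

/-- Equal to `x` when `x_i = 0`, where `x^{i,j}` is not a configuration. -/
def Config.move (x : Config V n) (i j : V) : Config V n :=
  if h : 1 ≤ x.val i then ⟨_root_.move x.val i j, (sum_move x.val j h).trans x.2⟩ else x

theorem Config.move_val (x : Config V n) {i : V} (j : V) (h : 1 ≤ x.val i) :
    (x.move i j).val = _root_.move x.val i j := by
  simp [Config.move, h]

variable (G : SimpleGraph V) [DecidableRel G.Adj] (d : ℕ)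

structure IsModelOneMatrix (g : ℕ → ℝ) (Q : Config V n → Config V n → ℝ) : Prop where
  apply_move : ∀ (x y : Config V n) (i j : V),
    i ≠ j → G.Adj i j → 1 ≤ x.val i → y.val = move x.val i j →
    Q x y = (1 / (d : ℝ)) * ((x.val i : ℝ) / (n : ℝ)) *
      (g (x.val j) / (g (x.val j) + g (x.val i)))
  apply_eq_zero : ∀ x y : Config V n, y ≠ x →
    (¬ ∃ i j : V, i ≠ j ∧ G.Adj i j ∧ 1 ≤ x.val i ∧ y.val = move x.val i j) → Q x y = 0
  apply_self : ∀ x : Config V n, Q x x = 1 - ∑ y ∈ univ.erase x, Q x y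

namespace IsModelOneMatrix

variable {G d} {g : ℕ → ℝ} {Q : Config V n → Config V n → ℝ}

theorem apply_nonneg_of_ne (hQ : IsModelOneMatrix G d g Q) (hg : ∀ p, 0 < g p)
    {x y : Config V n} (hyx : y ≠ x) : 0 ≤ Q x y := by
  by_cases h : ∃ i j : V, i ≠ j ∧ G.Adj i j ∧ 1 ≤ x.val i ∧ y.val = move x.val i j
  · obtain ⟨i, j, hij, hadj, hxi, hy⟩ := h
    rw [hQ.apply_move x y i j hij hadj hxi hy]
    have := hg (x.val i)
    have := hg (x.val j)
    positivity
  · exact (hQ.apply_eq_zero x y hyx h).ge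

theorem sum_erase_le_sum_movePairs (hQ : IsModelOneMatrix G d g Q) (hg : ∀ p, 0 < g p)
    (x : Config V n) :
    ∑ y ∈ univ.erase x, Q x y ≤ ∑ p ∈ movePairs G x, Q x (x.move p.1 p.2) := by
  set T := (movePairs G x).image fun p => x.move p.1 p.2
  have hmem : ∀ p ∈ movePairs G x, G.Adj p.1 p.2 ∧ 1 ≤ x.val p.1 := fun p hp =>
    (mem_filter.1 hp).2
  have hsub : T ⊆ univ.erase x := by
    simp only [T, image_subset_iff, mem_erase, mem_univ, and_true]
    intro p hp hpx
    obtain ⟨hadj, hxi⟩ := hmem p hp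
    exact move_ne x.val hadj.ne (by rw [← x.move_val p.2 hxi, hpx])
  have hzero : ∀ y ∈ univ.erase x, y ∉ T → Q x y = 0 := by
    intro y hy hyT
    refine hQ.apply_eq_zero x y (ne_of_mem_erase hy) ?_
    rintro ⟨i, j, -, hadj, hxi, hy⟩
    exact hyT (mem_image.2 ⟨(i, j), mem_filter.2 ⟨mem_univ _, hadj, hxi⟩,
      Subtype.ext (by rw [x.move_val j hxi, hy])⟩)
  calc ∑ y ∈ univ.erase x, Q x y = ∑ y ∈ T, Q x y := (sum_subset hsub hzero).symm
    _ ≤ _ := sum_image_le_of_nonneg fun y hy =>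
        hQ.apply_nonneg_of_ne hg (ne_of_mem_erase (hsub hy))

theorem sum_erase_le (hQ : IsModelOneMatrix G d g Q) (hG : G.IsRegularOfDegree d)
    (hg : ∀ p, 0 < g p) (x : Config V n) {ρ : ℝ} (hρ : 0 ≤ ρ)
    (hr : ∀ i j, G.Adj i j → 1 ≤ x.val i → g (x.val j) / (g (x.val j) + g (x.val i)) ≤ ρ) :
    ∑ y ∈ univ.erase x, Q x y ≤ ρ := by
  have hmove : ∀ p ∈ movePairs G x, Q x (x.move p.1 p.2) ≤
      (1 / (d : ℝ)) * ((x.val p.1 : ℝ) / n) * ρ := by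
    intro p hp
    obtain ⟨hadj, hxi⟩ := (mem_filter.1 hp).2
    rw [hQ.apply_move x _ p.1 p.2 hadj.ne hadj hxi (x.move_val p.2 hxi)]
    exact mul_le_mul_of_nonneg_left (hr p.1 p.2 hadj hxi) (by positivity)
  calc ∑ y ∈ univ.erase x, Q x y ≤ ∑ p ∈ movePairs G x, Q x (x.move p.1 p.2) :=
        hQ.sum_erase_le_sum_movePairs hg x
    _ ≤ ∑ p ∈ movePairs G x, (1 / (d : ℝ)) * ((x.val p.1 : ℝ) / n) * ρ := sum_le_sum hmove
    _ = (∑ p ∈ movePairs G x, (1 / (d : ℝ)) * ((x.val p.1 : ℝ) / n)) * ρ := (sum_mul ..).symm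
    _ ≤ 1 * ρ := mul_le_mul_of_nonneg_right (sum_movePairs_weight_le_one G d hG x) hρ
    _ = ρ := one_mul ρ

theorem isStochastic (hQ : IsModelOneMatrix G d g Q) (hG : G.IsRegularOfDegree d)
    (hg : ∀ p, 0 < g p) :
    (∀ x y : Config V n, 0 ≤ Q x y) ∧ ∀ x : Config V n, ∑ y, Q x y = 1 := by
  refine ⟨fun x y => ?_, fun x => ?_⟩
  · rcases eq_or_ne y x with rfl | hyx
    · have hle := hQ.sum_erase_le hG hg y zero_le_one fun i j _ _ => by
        rw [div_le_one (add_pos (hg _) (hg _))]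
        linarith [hg (y.val i)]
      linarith [hQ.apply_self y]
    · exact hQ.apply_nonneg_of_ne hg hyx
  · rw [← add_sum_erase _ _ (mem_univ x), hQ.apply_self x]
    ring

end IsModelOneMatrix

variable {G d} {f : ℝ → ℕ → ℝ} {P : ℝ → Config V n → Config V n → ℝ}

theorem isTheta_apply_move (hP : ∀ ε, 0 < ε → IsModelOneMatrix G d (f ε) (P ε))
    (hG : G.IsRegularOfDegree d) {x y : Config V n} {i j : V} (hadj : G.Adj i j)
    (hxi : 1 ≤ x.val i) (hy : y.val = move x.val i j) {k : ℤ} (hk : 0 ≤ k)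
    (hfj : IsTheta (fun ε => f ε (x.val j)) k) (hfi : IsTheta (fun ε => f ε (x.val i)) 0) :
    IsTheta (fun ε => P ε x y) k := by
  have hd : (0 : ℝ) < d := by
    exact_mod_cast hG i ▸ (G.degree_pos_iff_exists_adj i).2 ⟨j, hadj⟩
  have hn : (0 : ℝ) < n := by exact_mod_cast hxi.trans (x.apply_le i)
  have hxi' : (0 : ℝ) < x.val i := by exact_mod_cast hxi
  exact ((hfj.div_add hk hfi).const_mul (by positivity : 0 < (1 / (d : ℝ)) * (x.val i / n))).congr
    fun ε hε => ((hP ε hε).apply_move x y i j hadj.ne hadj hxi hy).symm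

theorem isTheta_apply_self (hP : ∀ ε, 0 < ε → IsModelOneMatrix G d (f ε) (P ε))
    (hG : G.IsRegularOfDegree d) (hfpos : ∀ ε : ℝ, 0 < ε → ∀ p : ℕ, 0 < f ε p)
    (hfΘ : ∀ p : ℕ, IsTheta (fun ε => f ε p) (if p = 0 then 1 else 0)) (x : Config V n) :
    IsTheta (fun ε => P ε x x) 0 := by
  obtain ⟨c, C, hc, hC, hbounds⟩ :=
    exists_eventually_uniform_bounds hfΘ (fun p => by split_ifs <;> norm_num) n
  refine isTheta_iff_eventually.2 ⟨c / (C + c), 1, by positivity, one_pos, ?_⟩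
  filter_upwards [hbounds, self_mem_nhdsWithin] with ε hε hε0
  have hQ := hP ε hε0
  have hle : ∑ y ∈ univ.erase x, P ε x y ≤ C / (C + c) :=
    hQ.sum_erase_le hG (hfpos ε hε0) x (by positivity) fun a b _ ha =>
      div_add_le_div_add (hfpos ε hε0 _).le hc (hε _ (x.apply_le b)).1
        ((hε _ (x.apply_le a)).2 (if_neg (by omega)))
  have hnonneg : 0 ≤ ∑ y ∈ univ.erase x, P ε x y :=
    sum_nonneg fun y hy => hQ.apply_nonneg_of_ne (hfpos ε hε0) (ne_of_mem_erase hy)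
  have hsplit : c / (C + c) = 1 - C / (C + c) := by field_simp; ring
  simp only [zpow_zero, mul_one, hQ.apply_self x]
  constructor <;> linarith

end ModelOne

theorem model_one_is_clustering_process_general
    {V : Type} [Fintype V] [DecidableEq V]
    (G : SimpleGraph V) [DecidableRel G.Adj]
    (d : ℕ) (hreg : ∀ v : V, G.degree v = d)
    (n : ℕ)
    (f : ℝ → ℕ → ℝ)
    (hfpos : ∀ ε : ℝ, 0 < ε → ∀ p : ℕ, 0 < f ε p)
    (hfΘ : ∀ p : ℕ, IsTheta (fun ε => f ε p) (if p = 0 then 1 else 0))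
    (P : ℝ → Config V n → Config V n → ℝ)
    (hPmove : ∀ ε : ℝ, 0 < ε → ∀ (x y : Config V n) (i j : V),
      i ≠ j → G.Adj i j → 1 ≤ x.val i → y.val = move x.val i j →
      P ε x y = (1 / (d : ℝ)) * ((x.val i : ℝ) / (n : ℝ)) *
        (f ε (x.val j) / (f ε (x.val j) + f ε (x.val i))))
    (hPoff : ∀ ε : ℝ, 0 < ε → ∀ x y : Config V n, y ≠ x →
      (¬ ∃ i j : V, i ≠ j ∧ G.Adj i j ∧ 1 ≤ x.val i ∧ y.val = move x.val i j) →
      P ε x y = 0)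
    (hPdiag : ∀ ε : ℝ, 0 < ε → ∀ x : Config V n,
      P ε x x = 1 - ∑ y ∈ Finset.univ.erase x, P ε x y) :
    (∀ ε : ℝ, 0 < ε →
      (∀ x y : Config V n, 0 ≤ P ε x y) ∧ ∀ x : Config V n, ∑ y, P ε x y = 1) ∧
    (∀ (x y : Config V n) (i j : V), (G.Adj i j ∨ j = i) → 1 ≤ x.val i →
      y.val = move x.val i j →
      IsTheta (fun ε => P ε x y) (if x.val j = 0 then 1 else 0)) := by
  have hP : ∀ ε, 0 < ε → IsModelOneMatrix G d (f ε) (P ε) := fun ε hε =>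
    ⟨hPmove ε hε, hPoff ε hε, hPdiag ε hε⟩
  refine ⟨fun ε hε => (hP ε hε).isStochastic hreg (hfpos ε hε), ?_⟩
  rintro x y i j (hadj | rfl) hxi hy
  · exact isTheta_apply_move hP hreg hadj hxi hy (by split_ifs <;> norm_num) (hfΘ _)
      (by simpa [show x.val i ≠ 0 by omega] using hfΘ (x.val i))
  · rw [if_neg (by omega), show y = x from Subtype.ext (by rw [hy, move, if_pos rfl])]
    exact isTheta_apply_self hP hreg hfpos hfΘ x

/-- Model 1: on a connected `d`-regular graph, the transition probabilities
`P^ε(x, x^{i,j}) = (1/d)·(x_i/n)·f_ε(x_j)/(f_ε(x_j) + f_ε(x_i))` (for `i ≠ j`, `v_i ∼ v_j`,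
`x_i ≥ 1`), zero for all other off-diagonal entries, and diagonal entries making rows sum
to one, define stochastic matrices forming a clustering process. -/
theorem model_one_is_clustering_process
    {V : Type} [Fintype V] [DecidableEq V]
    (G : SimpleGraph V) [DecidableRel G.Adj] (hconn : G.Connected)
    (d : ℕ) (hreg : ∀ v : V, G.degree v = d)
    (n : ℕ) (hn : 1 ≤ n)
    (f : ℝ → ℕ → ℝ)
    (hfpos : ∀ ε : ℝ, 0 < ε → ∀ p : ℕ, 0 < f ε p)
    (hfΘ : ∀ p : ℕ, IsTheta (fun ε => f ε p) (if p = 0 then 1 else 0))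
    (P : ℝ → Config V n → Config V n → ℝ)
    (hPmove : ∀ ε : ℝ, 0 < ε → ∀ (x y : Config V n) (i j : V),
      i ≠ j → G.Adj i j → 1 ≤ x.val i → y.val = move x.val i j →
      P ε x y = (1 / (d : ℝ)) * ((x.val i : ℝ) / (n : ℝ)) *
        (f ε (x.val j) / (f ε (x.val j) + f ε (x.val i))))
    (hPoff : ∀ ε : ℝ, 0 < ε → ∀ x y : Config V n, y ≠ x →
      (¬ ∃ i j : V, i ≠ j ∧ G.Adj i j ∧ 1 ≤ x.val i ∧ y.val = move x.val i j) →
      P ε x y = 0)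
    (hPdiag : ∀ ε : ℝ, 0 < ε → ∀ x : Config V n,
      P ε x x = 1 - ∑ y ∈ Finset.univ.erase x, P ε x y) :
    (∀ ε : ℝ, 0 < ε →
      (∀ x y : Config V n, 0 ≤ P ε x y) ∧ ∀ x : Config V n, ∑ y, P ε x y = 1) ∧
    (∀ (x y : Config V n) (i j : V), (G.Adj i j ∨ j = i) → 1 ≤ x.val i →
      y.val = move x.val i j →
      IsTheta (fun ε => P ε x y) (if x.val j = 0 then 1 else 0)) :=
  model_one_is_clustering_process_general G d hreg n f hfpos hfΘ P hPmove hPoff hPdiag
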